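/- For each composition α, the unique composition tableau of shape α and content α is the filling in which every cell of row i contains the entry i; in particular K_{α,α} = 1, where K_{α,γ} counts composition tableaux of shape α and content γ. -/

import Mathlib

/-- The largest part of a composition (0 for the empty composition). -/
def maxPart (α : List ℕ) : ℕ := α.foldr max 0

/-- A composition: a list of positive integers. -/
def IsComposition (α : List ℕ) : Prop := ∀ x ∈ α, 0 < x

/-- A composition is inverting if for each `i > 1` not exceeding the largest part,
there are indices `s < t` with `α_s = i` and `α_t = i - 1`. -/
def Inverting (α : List ℕ) : Prop :=
  ∀ i, 1 < i → i ≤ maxPart α →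
    ∃ s t, s < t ∧ t < α.length ∧ α.getD s 0 = i ∧ α.getD t 0 = i - 1

/-- (CT1) Rows of the filling weakly decrease from left to right. -/
def RowsDecrease (α : List ℕ) (T : ℕ → ℕ → ℕ) : Prop :=
  ∀ i j, i < α.length → j + 1 < α.getD i 0 → T i (j + 1) ≤ T i j

/-- (CT2) The leftmost column strictly increases from top to bottom. -/
def FirstColIncr (α : List ℕ) (T : ℕ → ℕ → ℕ) : Prop :=
  ∀ i₁ i₂, i₁ < i₂ → i₂ < α.length → T i₁ 0 < T i₂ 0

/-- (CT3) The triple rule, for cells `(i,c)` and `(j,c)` in the same column with `i < j`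
(rows and columns 0-indexed). -/
def TripleRule (α : List ℕ) (T : ℕ → ℕ → ℕ) : Prop :=
  ∀ i j c, i < j → j < α.length → c < α.getD i 0 → c < α.getD j 0 →
    (α.getD j 0 ≤ α.getD i 0 → 1 ≤ c → (T j c < T i c ∨ T i (c - 1) < T j c)) ∧
    (α.getD i 0 < α.getD j 0 → (T j c < T i c ∨ T i c < T j (c + 1)))

/-- A composition tableau of shape `α`: positive entries in the cells of the diagram of `α`
(and `0` outside), satisfying (CT1), (CT2) and the triple rule (CT3). -/
def IsCompTableau (α : List ℕ) (T : ℕ → ℕ → ℕ) : Prop :=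
  (∀ i j, i < α.length → j < α.getD i 0 → 0 < T i j) ∧
  (∀ i j, α.length ≤ i ∨ α.getD i 0 ≤ j → T i j = 0) ∧
  RowsDecrease α T ∧ FirstColIncr α T ∧ TripleRule α T

/-- The number of cells of the tableau containing the value `v`. -/
def contentCount (α : List ℕ) (T : ℕ → ℕ → ℕ) (v : ℕ) : ℕ :=
  ∑ i ∈ Finset.range α.length, ((Finset.range (α.getD i 0)).filter (fun j => T i j = v)).card

/-- The tableau has content `γ`: each value `v ≥ 1` occurs `γ_v` times. -/
def HasContent (α : List ℕ) (T : ℕ → ℕ → ℕ) (γ : List ℕ) : Prop :=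
  ∀ v, 1 ≤ v → contentCount α T v = γ.getD (v - 1) 0

/-- The super-standard filling of `α`: every cell of (0-indexed) row `i` contains `i+1`. -/
def superT (α : List ℕ) : ℕ → ℕ → ℕ := fun i j =>
  if i < α.length ∧ j < α.getD i 0 then i + 1 else 0

/-!
Every entry of a tableau of content `α` is at most `ℓ(α)`, since a larger value occurs in it at
all but has multiplicity `0`. So the strictly increasing first column reads `1, 2, …, ℓ(α)`, and
as rows decrease, row `i` holds only entries `≤ i + 1`. By strong induction on `i`, row `i`
holds only `i + 1`: a smaller entry `r + 1` in row `i` would add to the `α_r` copies already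
filling row `r`, exceeding its multiplicity `α_r`.
-/

open Finset

theorem StrictMonoOn.add_sub_le_of_le {f : ℕ → ℕ} {n a b : ℕ} (hf : StrictMonoOn f (Set.Iio n))
    (hab : a ≤ b) (hb : b < n) : f a + (b - a) ≤ f b := by
  induction b, hab using Nat.le_induction with
  | base => simp
  | succ b hab ih =>
    have hstep : f b < f (b + 1) := hf (Set.mem_Iio.mpr (by omega)) hb (by omega)
    have := ih (by omega)
    omega

theorem StrictMonoOn.eq_add_one {f : ℕ → ℕ} {n j : ℕ} (hf : StrictMonoOn f (Set.Iio n))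
    (h0 : 0 < f 0) (hlast : f (n - 1) ≤ n) (hj : j < n) : f j = j + 1 := by
  have hlow := hf.add_sub_le_of_le (Nat.zero_le j) hj
  have hhigh := hf.add_sub_le_of_le (show j ≤ n - 1 by omega) (by omega)
  omega

section Tableaux

variable {α : List ℕ} {T : ℕ → ℕ → ℕ}

theorem IsComposition.getD_pos (hα : IsComposition α) {i : ℕ} (hi : i < α.length) :
    0 < α.getD i 0 := by
  rw [List.getD_eq_getElem α 0 hi]
  exact hα _ (List.getElem_mem hi)

def rowContent (α : List ℕ) (T : ℕ → ℕ → ℕ) (i v : ℕ) : ℕ :=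
  #{j ∈ range (α.getD i 0) | T i j = v}

theorem contentCount_eq_sum_rowContent (v : ℕ) :
    contentCount α T v = ∑ i ∈ range α.length, rowContent α T i v := rfl

theorem HasContent.contentCount_add_one {γ : List ℕ} (hC : HasContent α T γ) (r : ℕ) :
    contentCount α T (r + 1) = γ.getD r 0 := by
  simpa using hC (r + 1) (Nat.le_add_left 1 r)

theorem rowContent_pos {i j v : ℕ} (hj : j < α.getD i 0) (hv : T i j = v) :
    0 < rowContent α T i v :=
  card_pos.mpr ⟨j, mem_filter.mpr ⟨mem_range.mpr hj, hv⟩⟩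

theorem rowContent_eq_getD {i v : ℕ} (h : ∀ j < α.getD i 0, T i j = v) :
    rowContent α T i v = α.getD i 0 := by
  rw [rowContent, filter_true_of_mem fun j hj => h j (mem_range.mp hj), card_range]

theorem rowContent_eq_zero {i v : ℕ} (h : ∀ j < α.getD i 0, T i j ≠ v) :
    rowContent α T i v = 0 :=
  card_eq_zero.mpr (filter_eq_empty_iff.mpr fun j hj => h j (mem_range.mp hj))

theorem rowContent_le_contentCount {i : ℕ} (hi : i < α.length) (v : ℕ) :
    rowContent α T i v ≤ contentCount α T v :=
  single_le_sum (f := fun k => rowContent α T k v) (fun _ _ => Nat.zero_le _) (mem_range.mpr hi)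

theorem rowContent_add_rowContent_le_contentCount {i i' : ℕ} (hne : i ≠ i')
    (hi : i < α.length) (hi' : i' < α.length) (v : ℕ) :
    rowContent α T i v + rowContent α T i' v ≤ contentCount α T v := by
  rw [← sum_pair (f := fun k => rowContent α T k v) hne]
  refine sum_le_sum_of_subset fun k hk => ?_
  rw [mem_insert, mem_singleton] at hk
  rcases hk with rfl | rfl <;> exact mem_range.mpr ‹_›

theorem superT_of_lt {i j : ℕ} (hi : i < α.length) (hj : j < α.getD i 0) :
    superT α i j = i + 1 :=
  if_pos ⟨hi, hj⟩

theorem isCompTableau_superT (hα : IsComposition α) : IsCompTableau α (superT α) := by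
  refine ⟨fun i j hi hj => ?_, fun i j h => if_neg (by omega), fun i j hi hj => ?_,
    fun i₁ i₂ h12 h2 => ?_, fun i j c hij hj hci hcj => ⟨fun _ _ => .inr ?_, fun _ => .inr ?_⟩⟩
  · rw [superT_of_lt hi hj]
    omega
  · rw [superT_of_lt hi hj, superT_of_lt hi (by omega)]
  · rw [superT_of_lt (h12.trans h2) (hα.getD_pos (h12.trans h2)), superT_of_lt h2 (hα.getD_pos h2)]
    omega
  · rw [superT_of_lt (hij.trans hj) (by omega), superT_of_lt hj hcj]
    omega
  · rw [superT_of_lt (hij.trans hj) hci, superT_of_lt hj (by omega)]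
    omega

theorem rowContent_superT {i : ℕ} (hi : i < α.length) (r : ℕ) :
    rowContent α (superT α) i (r + 1) = if i = r then α.getD i 0 else 0 := by
  split_ifs with h
  · exact rowContent_eq_getD fun j hj => by rw [superT_of_lt hi hj, h]
  · exact rowContent_eq_zero fun j hj => by rw [superT_of_lt hi hj]; omega

theorem hasContent_superT : HasContent α (superT α) α := by
  intro v hv
  obtain ⟨r, rfl⟩ : ∃ r, v = r + 1 := ⟨v - 1, by omega⟩
  rw [contentCount_eq_sum_rowContent,
    sum_congr rfl fun i hi => rowContent_superT (mem_range.mp hi) r,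
    sum_ite_eq', Nat.add_sub_cancel]
  split_ifs with hr
  · rfl
  · exact (List.getD_eq_default _ _ (not_lt.mp (mt mem_range.mpr hr))).symm

theorem FirstColIncr.strictMonoOn (h : FirstColIncr α T) :
    StrictMonoOn (fun i => T i 0) (Set.Iio α.length) :=
  fun _ _ _ hb hab => h _ _ hab hb

theorem RowsDecrease.le_first (h : RowsDecrease α T) {i c : ℕ} (hi : i < α.length)
    (hc : c < α.getD i 0) : T i c ≤ T i 0 := by
  induction c with
  | zero => rfl
  | succ c ih => exact (h i c hi hc).trans (ih (by omega))

theorem HasContent.le_length (hC : HasContent α T α) {i j : ℕ} (hi : i < α.length)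
    (hj : j < α.getD i 0) (hpos : 0 < T i j) : T i j ≤ α.length := by
  obtain ⟨r, hr⟩ : ∃ r, T i j = r + 1 := ⟨T i j - 1, by omega⟩
  have hrow := rowContent_pos hj hr
  have hcount := rowContent_le_contentCount (T := T) hi (r + 1)
  rw [hC.contentCount_add_one r] at hcount
  by_contra! hlarge
  rw [List.getD_eq_default _ _ (by omega)] at hcount
  omega

theorem HasContent.eq_add_one_of_le (hC : HasContent α T α)
    (hpos : ∀ i j, i < α.length → j < α.getD i 0 → 0 < T i j)
    (hle : ∀ i j, i < α.length → j < α.getD i 0 → T i j ≤ i + 1) :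
    ∀ i j, i < α.length → j < α.getD i 0 → T i j = i + 1 := by
  intro i
  induction i using Nat.strong_induction_on with
  | _ i ih =>
    intro c hi hc
    by_contra hne
    obtain ⟨r, hr⟩ : ∃ r, T i c = r + 1 := ⟨T i c - 1, by have := hpos i c hi hc; omega⟩
    have hri : r < i := by have := hle i c hi hc; omega
    have hfull : rowContent α T r (r + 1) = α.getD r 0 :=
      rowContent_eq_getD fun k hk => ih r hri k (hri.trans hi) hk
    have hrow := rowContent_pos hc hr
    have hsum := rowContent_add_rowContent_le_contentCount (T := T) hri.ne (hri.trans hi) hi (r + 1)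
    rw [hfull, hC.contentCount_add_one r] at hsum
    omega

theorem IsCompTableau.eq_superT (hα : IsComposition α) (hT : IsCompTableau α T)
    (hC : HasContent α T α) : T = superT α := by
  obtain ⟨hpos, hzero, hrows, hcol, -⟩ := hT
  have hfirst : ∀ i, i < α.length → T i 0 = i + 1 := fun i hi =>
    hcol.strictMonoOn.eq_add_one (hpos 0 0 (by omega) (hα.getD_pos (by omega)))
      (hC.le_length (by omega) (hα.getD_pos (by omega)) (hpos _ _ (by omega)
        (hα.getD_pos (by omega)))) hi
  have hentries := hC.eq_add_one_of_le hpos fun i j hi hj =>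
    (hrows.le_first hi hj).trans (hfirst i hi).le
  funext i j
  by_cases h : i < α.length ∧ j < α.getD i 0
  · rw [hentries i j h.1 h.2, superT_of_lt h.1 h.2]
  · rw [hzero i j (by omega), superT, if_neg h]

end Tableaux

/-- For each composition `α`, the unique composition tableau of shape `α` and content `α`
is the filling in which every cell of row `i` contains the entry `i`; in particular
`K_{α,α} = 1`. -/
theorem unique_tableau_shape_content (α : List ℕ) (hα : IsComposition α) :
    IsCompTableau α (superT α) ∧ HasContent α (superT α) α ∧
    ∀ T : ℕ → ℕ → ℕ, IsCompTableau α T → HasContent α T α → T = superT α :=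
  ⟨isCompTableau_superT hα, hasContent_superT, fun _ hT hC => hT.eq_superT hα hC⟩
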